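/- arXiv:2207.05281 — 2 statements merged into one kernel-verified Lean document; each statement's English description precedes it below -/
import Mathlib

section
/- Let a ≥ 0, b ≥ 0 with a + b > 0, p ≥ 2 an integer, and l(x) = a x (1-x)^{p-1} + b (1-x)^p on [r_1, r_2] with 0 ≤ r_1 ≤ r_2 ≤ 1. Define δ = (a - bp)/((a-b)p) when a ≠ b. Then the point x_* given by: x_* = δ if a > bp and r_1 ≤ δ ≤ r_2; x_* = r_2 if a > bp and δ > r_2; x_* = r_1 otherwise, maximizes l(x) over x ∈ [r_1, r_2]. -/
/-!
The derivative is `l'(x) = (1 - x)^(p-2) ((a - b p) - p (a - b) x)`. If `a > b p` the linear factor equals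
`(a - b) p (δ - x)` with `0 < δ ≤ 1`, so `l` increases up to `δ` and decreases on `[δ, 1]`;
otherwise the linear factor is `≤ 0` on `[0, 1]` and `l` decreases there. In both cases the
maximum over `[r₁, r₂]` sits at the point of `[r₁, r₂]` closest to `δ` (resp. at `r₁`).
-/

open Set

def mixedBernstein (a b : ℝ) (p : ℕ) (x : ℝ) : ℝ :=
  a * x * (1 - x) ^ (p - 1) + b * (1 - x) ^ p

noncomputable def mixedBernsteinPeak (a b : ℝ) (p : ℕ) : ℝ :=
  (a - b * p) / ((a - b) * p)

theorem continuous_mixedBernstein (a b : ℝ) (p : ℕ) : Continuous (mixedBernstein a b p) := by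
  unfold mixedBernstein; fun_prop

theorem hasDerivAt_mixedBernstein (a b : ℝ) {p : ℕ} (hp : 2 ≤ p) (x : ℝ) :
    HasDerivAt (mixedBernstein a b p)
      ((1 - x) ^ (p - 2) * (a - b * p - p * (a - b) * x)) x := by
  obtain ⟨q, rfl⟩ := Nat.exists_eq_add_of_le' hp
  have hsub := (hasDerivAt_id' x).const_sub 1
  have h : HasDerivAt (fun y => a * y * (1 - y) ^ (q + 1) + b * (1 - y) ^ (q + 2)) _ x :=
    (((hasDerivAt_id' x).const_mul a).mul (hsub.pow (q + 1))).add ((hsub.pow (q + 2)).const_mul b)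
  refine h.congr_deriv ?_
  simp only [Nat.add_sub_cancel, Pi.pow_apply]
  push_cast
  ring

theorem mixedBernsteinPeak_le_one {a b : ℝ} (hb : 0 ≤ b) {p : ℕ} (hp : 1 ≤ p) (h : b * p < a) :
    mixedBernsteinPeak a b p ≤ 1 := by
  have hp₁ : (1 : ℝ) ≤ p := by exact_mod_cast hp
  have ha : 0 < a := (mul_nonneg hb (by linarith)).trans_lt h
  rw [mixedBernsteinPeak, div_le_one (by nlinarith)]
  nlinarith

theorem sub_mul_eq_mul_mixedBernsteinPeak_sub {a b : ℝ} (hab : b < a) {p : ℕ} (hp : 1 ≤ p) (x : ℝ) :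
    a - b * p - p * (a - b) * x = (a - b) * p * (mixedBernsteinPeak a b p - x) := by
  have hp₀ : (p : ℝ) ≠ 0 := by positivity
  have hab₀ : a - b ≠ 0 := sub_ne_zero.2 hab.ne'
  rw [mixedBernsteinPeak]
  field_simp

theorem monotoneOn_mixedBernstein {a b : ℝ} (hb : 0 ≤ b) {p : ℕ} (hp : 2 ≤ p) (h : b * p < a) :
    MonotoneOn (mixedBernstein a b p) (Iic (mixedBernsteinPeak a b p)) := by
  have hp₁ : (1 : ℝ) ≤ p := by exact_mod_cast (by omega : 1 ≤ p)
  have hab : 0 < a - b := sub_pos.2 ((le_mul_of_one_le_right hb hp₁).trans_lt h)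
  have hpeak := mixedBernsteinPeak_le_one hb (by omega) h
  refine monotoneOn_of_hasDerivWithinAt_nonneg (convex_Iic _)
    (continuous_mixedBernstein a b p).continuousOn
    (fun x _ => (hasDerivAt_mixedBernstein a b hp x).hasDerivWithinAt) fun x hx => ?_
  rw [interior_Iic, mem_Iio] at hx
  rw [sub_mul_eq_mul_mixedBernsteinPeak_sub (sub_pos.1 hab) (by omega)]
  exact mul_nonneg (pow_nonneg (by linarith) _) (mul_nonneg (by positivity) (by linarith))

theorem antitoneOn_mixedBernstein_of_lt {a b : ℝ} (hb : 0 ≤ b) {p : ℕ} (hp : 2 ≤ p) (h : b * p < a) :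
    AntitoneOn (mixedBernstein a b p) (Icc (mixedBernsteinPeak a b p) 1) := by
  have hp₁ : (1 : ℝ) ≤ p := by exact_mod_cast (by omega : 1 ≤ p)
  have hab : 0 < a - b := sub_pos.2 ((le_mul_of_one_le_right hb hp₁).trans_lt h)
  refine antitoneOn_of_hasDerivWithinAt_nonpos (convex_Icc _ _)
    (continuous_mixedBernstein a b p).continuousOn
    (fun x _ => (hasDerivAt_mixedBernstein a b hp x).hasDerivWithinAt) fun x hx => ?_
  rw [interior_Icc, mem_Ioo] at hx
  rw [sub_mul_eq_mul_mixedBernsteinPeak_sub (sub_pos.1 hab) (by omega)]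
  exact mul_nonpos_of_nonneg_of_nonpos (pow_nonneg (by linarith) _)
    (mul_nonpos_of_nonneg_of_nonpos (by positivity) (by linarith))

theorem antitoneOn_mixedBernstein_of_le {a b : ℝ} (ha : 0 ≤ a) {p : ℕ} (hp : 2 ≤ p) (h : a ≤ b * p) :
    AntitoneOn (mixedBernstein a b p) (Icc 0 1) := by
  have hp₁ : (1 : ℝ) ≤ p := by exact_mod_cast (by omega : 1 ≤ p)
  refine antitoneOn_of_hasDerivWithinAt_nonpos (convex_Icc _ _)
    (continuous_mixedBernstein a b p).continuousOn
    (fun x _ => (hasDerivAt_mixedBernstein a b hp x).hasDerivWithinAt) fun x hx => ?_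
  rw [interior_Icc, mem_Ioo] at hx
  -- the linear factor equals (a - b p)(1 - x) - (p - 1) a x
  have : a - b * p - p * (a - b) * x ≤ 0 := by
    nlinarith [mul_nonneg (sub_nonneg.2 h) (sub_nonneg.2 hx.2.le),
      mul_nonneg (mul_nonneg ha hx.1.le) (sub_nonneg.2 hp₁)]
  exact mul_nonpos_of_nonneg_of_nonpos (pow_nonneg (by linarith) _) this

theorem isMaxOn_Icc_clamp_of_mono_anti {α β : Type*} [LinearOrder α] [Preorder β] {f : α → β}
    {c v r₁ r₂ : α} (h₀ : MonotoneOn f (Iic c)) (h₁ : AntitoneOn f (Icc c v))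
    (hr : r₁ ≤ r₂) (hv : r₂ ≤ v) :
    let x := if r₁ ≤ c ∧ c ≤ r₂ then c else if r₂ < c then r₂ else r₁
    x ∈ Icc r₁ r₂ ∧ IsMaxOn f (Icc r₁ r₂) x := by
  dsimp only
  split_ifs with hc hc'
  · exact ⟨hc, isMaxOn_Icc_of_mono_anti (h₀.mono Icc_subset_Iic_self)
      (h₁.mono (Icc_subset_Icc le_rfl hv))⟩
  · exact ⟨right_mem_Icc.2 hr,
      isMaxOn_Icc_of_mono_anti (h₀.mono (Icc_subset_Iic_self.trans (Iic_subset_Iic.2 hc'.le)))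
        ((subsingleton_Icc_of_ge le_rfl).antitoneOn f)⟩
  · have hc₁ : c < r₁ := by
      by_contra! h
      exact hc ⟨h, not_lt.1 hc'⟩
    exact ⟨left_mem_Icc.2 hr,
      isMaxOn_Icc_of_mono_anti ((subsingleton_Icc_of_ge le_rfl).monotoneOn f)
        (h₁.mono (Icc_subset_Icc hc₁.le hv))⟩

theorem stmt9_general (a b : ℝ) (ha : 0 ≤ a) (hb : 0 ≤ b)
    (p : ℕ) (hp : 2 ≤ p) (r₁ r₂ : ℝ) (hr₁ : 0 ≤ r₁) (hr₁₂ : r₁ ≤ r₂) (hr₂ : r₂ ≤ 1) :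
    let l : ℝ → ℝ := fun x => a * x * (1 - x) ^ (p - 1) + b * (1 - x) ^ p
    let δ : ℝ := (a - b * p) / ((a - b) * p)
    let xstar : ℝ :=
      if a > b * p ∧ r₁ ≤ δ ∧ δ ≤ r₂ then δ
      else if a > b * p ∧ r₂ < δ then r₂
      else r₁
    xstar ∈ Set.Icc r₁ r₂ ∧ ∀ x ∈ Set.Icc r₁ r₂, l x ≤ l xstar := by
  intro l δ xstar
  by_cases h : b * p < a
  · have hx : xstar = if r₁ ≤ δ ∧ δ ≤ r₂ then δ else if r₂ < δ then r₂ else r₁ := by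
      simp only [xstar, gt_iff_lt, h, true_and]
    rw [hx]
    exact isMaxOn_Icc_clamp_of_mono_anti (monotoneOn_mixedBernstein hb hp h)
      (antitoneOn_mixedBernstein_of_lt hb hp h) hr₁₂ hr₂
  · have hx : xstar = r₁ := by simp only [xstar, gt_iff_lt, h, false_and, if_false]
    have hanti := antitoneOn_mixedBernstein_of_le ha hp (not_lt.1 h)
    rw [hx]
    exact ⟨left_mem_Icc.2 hr₁₂, fun x hx =>
      hanti ⟨hr₁, hr₁₂.trans hr₂⟩ ⟨hr₁.trans hx.1, hx.2.trans hr₂⟩ hx.1⟩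

theorem stmt9 (a b : ℝ) (ha : 0 ≤ a) (hb : 0 ≤ b) (hab : 0 < a + b)
    (p : ℕ) (hp : 2 ≤ p) (r₁ r₂ : ℝ) (hr₁ : 0 ≤ r₁) (hr₁₂ : r₁ ≤ r₂) (hr₂ : r₂ ≤ 1) :
    let l : ℝ → ℝ := fun x => a * x * (1 - x) ^ (p - 1) + b * (1 - x) ^ p
    let δ : ℝ := (a - b * p) / ((a - b) * p)
    let xstar : ℝ :=
      if a > b * p ∧ r₁ ≤ δ ∧ δ ≤ r₂ then δ
      else if a > b * p ∧ r₂ < δ then r₂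
      else r₁
    xstar ∈ Set.Icc r₁ r₂ ∧ ∀ x ∈ Set.Icc r₁ r₂, l x ≤ l xstar :=
  stmt9_general a b ha hb p hp r₁ r₂ hr₁ hr₁₂ hr₂
end

section
/- Let 0 < c_1 ≤ c_2 ≤ ... ≤ c_m ≤ 1 with c_1 < 1/m and ∑_i c_i > 1. Then there exist k ∈ {1,...,m-1} and u ∈ [c_k, c_{k+1}) with ∑_{i=1}^k c_i + (m-k) u = 1, and the vector w_* = (c_1, ..., c_k, u, ..., u) maximizes f(w) = ∏_{i=1}^m w_i over S = {w ∈ ℝ^m : 0 ≤ w_i ≤ c_i, ∑_i w_i = 1}. -/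
/-!
The water level is found by a discrete intermediate value argument: with `S_j = c_1 + ⋯ + c_j`,
the quantity `S_j + (m - j) c_{j+1}` is `m c_1 < 1` at `j = 0` and `∑ c > 1` at `j = m - 1`, so
some `k` has `S_{k-1} + (m - k + 1) c_k ≤ 1 < S_k + (m - k) c_{k+1}`, and solving
`S_k + (m - k) u = 1` gives `c_k ≤ u < c_{k+1}`.

Optimality is the first-order condition for the concave function `∑ log w_i`: since
`log x ≤ x - 1`, `log ∏ w - log ∏ w_* ≤ ∑ (w_i - w_*_i) / w_*_i`. On the capped coordinates
`w_i - w_*_i ≤ 0` and `w_*_i ≤ u`, so each term is at most `(w_i - w_*_i) / u`, and these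
sum to `0` because both vectors have total mass `1`.
-/

open Finset

section WaterFilling

variable {ι : Type*} [Fintype ι]

theorem Real.prod_le_prod_of_sum_div_le_card {v w : ι → ℝ} (hv : ∀ i, 0 < v i)
    (hw : ∀ i, 0 ≤ w i) (h : ∑ i, w i / v i ≤ Fintype.card ι) :
    ∏ i, w i ≤ ∏ i, v i := by
  have hprod_v : 0 < ∏ i, v i := prod_pos fun i _ => hv i
  by_cases hzero : ∃ i, w i = 0
  · obtain ⟨i, hi⟩ := hzero
    rw [prod_eq_zero (mem_univ i) hi]
    exact hprod_v.le
  push Not at hzero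
  have hratio : ∀ i, 0 < w i / v i := fun i => div_pos ((hw i).lt_of_ne' (hzero i)) (hv i)
  have hlog : ∑ i, Real.log (w i / v i) ≤ 0 := calc
    ∑ i, Real.log (w i / v i) ≤ ∑ i, (w i / v i - 1) :=
      sum_le_sum fun i _ => Real.log_le_sub_one_of_pos (hratio i)
    _ ≤ 0 := by simpa [sum_sub_distrib] using h
  have hprod_ratio : ∏ i, (w i / v i) ≤ 1 := calc
    ∏ i, (w i / v i) = Real.exp (∑ i, Real.log (w i / v i)) := by
      rw [Real.exp_sum]
      exact prod_congr rfl fun i _ => (Real.exp_log (hratio i)).symm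
    _ ≤ 1 := Real.exp_le_one_iff.2 hlog
  rwa [prod_div_distrib, div_le_one hprod_v] at hprod_ratio

theorem Real.prod_le_prod_of_sum_eq_of_level {v w : ι → ℝ} {u : ℝ} (hu : 0 < u)
    (hv : ∀ i, 0 < v i) (hw : ∀ i, 0 ≤ w i) (hsum : ∑ i, w i = ∑ i, v i)
    (hlevel : ∀ i, v i = u ∨ (v i ≤ u ∧ w i ≤ v i)) :
    ∏ i, w i ≤ ∏ i, v i := by
  refine Real.prod_le_prod_of_sum_div_le_card hv hw ?_
  have hterm : ∀ i, w i / v i ≤ 1 + (w i - v i) / u := by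
    intro i
    rcases hlevel i with hvi | ⟨hvu, hwv⟩
    · rw [hvi]
      field_simp
      linarith
    · calc w i / v i = 1 + (w i - v i) / v i := by field_simp [(hv i).ne']; ring
        _ ≤ 1 + (w i - v i) / u := by
          gcongr 1 + ?_
          rw [div_le_div_iff₀ (hv i) hu]
          nlinarith
  calc ∑ i, w i / v i ≤ ∑ i, (1 + (w i - v i) / u) := sum_le_sum fun i _ => hterm i
    _ = Fintype.card ι := by
      rw [sum_add_distrib, ← sum_div, sum_sub_distrib, hsum]
      simp

end WaterFilling

section PartialSums

variable {m : ℕ} (c : Fin m → ℝ)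

/-- The paper's 1-based `c_1 + ⋯ + c_j`; here the capacities are indexed from `0`. -/
def partialSum (j : ℕ) : ℝ := ∑ i ∈ univ.filter (fun i : Fin m => (i : ℕ) < j), c i

theorem partialSum_zero : partialSum c 0 = 0 := by
  simp [partialSum]

theorem partialSum_succ {j : ℕ} (hj : j < m) :
    partialSum c (j + 1) = partialSum c j + c ⟨j, hj⟩ := by
  have hinsert : univ.filter (fun i : Fin m => (i : ℕ) < j + 1)
      = insert ⟨j, hj⟩ (univ.filter fun i : Fin m => (i : ℕ) < j) := by
    ext i
    simp only [mem_filter, mem_univ, true_and, mem_insert, Fin.ext_iff]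
    omega
  rw [partialSum, hinsert, sum_insert (by simp), add_comm]
  rfl

theorem partialSum_self : partialSum c m = ∑ i, c i := by
  simp [partialSum]

theorem sum_ite_val_lt {k : ℕ} (hk : k ≤ m) (u : ℝ) :
    ∑ i : Fin m, (if (i : ℕ) < k then c i else u) = partialSum c k + (m - k) * u := by
  have hcard : #(univ.filter fun i : Fin m => ¬ (i : ℕ) < k) = m - k := by
    have := card_filter_add_card_filter_not (s := univ) (fun i : Fin m => (i : ℕ) < k)
    rw [Fin.card_filter_val_lt, card_univ, Fintype.card_fin, min_eq_right hk] at this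
    omega
  rw [sum_ite, sum_const, hcard, nsmul_eq_mul, Nat.cast_sub hk]
  rfl

theorem exists_waterLevel (h0 : 0 < m) (hc1 : c ⟨0, h0⟩ < 1 / m) (hcsum : 1 < ∑ i, c i) :
    ∃ k, 1 ≤ k ∧ ∃ hkm : k < m, ∃ u : ℝ,
      c ⟨k - 1, (k.sub_le 1).trans_lt hkm⟩ ≤ u ∧ u < c ⟨k, hkm⟩ ∧
      partialSum c k + (m - k) * u = 1 := by
  set P : ℕ → Prop := fun j => ∃ hj : j < m, 1 < partialSum c j + (m - j) * c ⟨j, hj⟩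
  have hm_pos : (0 : ℝ) < m := by exact_mod_cast h0
  have hP0 : ¬ P 0 := by
    rintro ⟨_, h⟩
    rw [partialSum_zero, Nat.cast_zero, sub_zero, zero_add] at h
    rw [lt_div_iff₀ hm_pos] at hc1
    linarith
  have hPlast : P (m - 1) := by
    refine ⟨by omega, ?_⟩
    have hsucc := partialSum_succ c (j := m - 1) (by omega)
    rw [Nat.sub_add_cancel h0, partialSum_self] at hsucc
    rw [Nat.cast_sub h0, Nat.cast_one, sub_sub_cancel, one_mul, ← hsucc]
    exact hcsum
  obtain ⟨j, hPj, hj1, hPj1⟩ := Nat.exists_not_and_succ_of_not_zero_of_exists hP0 ⟨_, hPlast⟩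
  have hPj' : partialSum c j + (m - j) * c ⟨j, by omega⟩ ≤ 1 :=
    not_lt.1 fun h => hPj ⟨by omega, h⟩
  have hgap : (0 : ℝ) < m - (j + 1 : ℕ) := sub_pos.2 (by exact_mod_cast hj1)
  have hsucc := partialSum_succ c (j := j) (by omega)
  refine ⟨j + 1, by omega, hj1, (1 - partialSum c (j + 1)) / (m - (j + 1 : ℕ)), ?_, ?_, ?_⟩
  · show c ⟨j, _⟩ ≤ _
    rw [le_div_iff₀ hgap, hsucc]
    push_cast
    linarith
  · rw [div_lt_iff₀ hgap]
    linarith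
  · field_simp
    ring

end PartialSums

theorem stmt18 (m : ℕ) (hm : 2 ≤ m) (c : Fin m → ℝ)
    (hc : ∀ i, 0 < c i ∧ c i ≤ 1)
    (hmono : ∀ i j : Fin m, i ≤ j → c i ≤ c j)
    (hc1 : c ⟨0, by omega⟩ < 1 / m) (hcsum : 1 < ∑ i, c i) :
    ∃ k : ℕ, ∃ hk1 : 1 ≤ k, ∃ hkm : k < m, ∃ u : ℝ,
      c ⟨k - 1, by omega⟩ ≤ u ∧ u < c ⟨k, hkm⟩ ∧
      (∑ i ∈ Finset.univ.filter (fun i : Fin m => (i : ℕ) < k), c i)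
        + ((m : ℝ) - k) * u = 1 ∧
      (let wstar : Fin m → ℝ := fun i => if (i : ℕ) < k then c i else u
       ((∀ i, 0 ≤ wstar i ∧ wstar i ≤ c i) ∧ ∑ i, wstar i = 1) ∧
       ∀ w : Fin m → ℝ, (∀ i, 0 ≤ w i ∧ w i ≤ c i) → (∑ i, w i = 1) →
         ∏ i, w i ≤ ∏ i, wstar i) := by
  obtain ⟨k, hk1, hkm, u, hlo, hhi, hsum⟩ := exists_waterLevel c (by omega) hc1 hcsum
  refine ⟨k, hk1, hkm, u, hlo, hhi, hsum, ?_⟩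
  intro wstar
  have hu : 0 < u := (hc _).1.trans_le hlo
  have hbelow : ∀ i : Fin m, (i : ℕ) < k → c i ≤ u := fun i hi =>
    (hmono _ _ (Fin.le_def.2 (by simp only; omega))).trans hlo
  have habove : ∀ i : Fin m, ¬ (i : ℕ) < k → u ≤ c i := fun i hi =>
    hhi.le.trans (hmono _ _ (Fin.le_def.2 (by simp only; omega)))
  have hpos : ∀ i, 0 < wstar i := fun i => by
    dsimp only [wstar]
    split_ifs
    exacts [(hc i).1, hu]
  have hcap : ∀ i, wstar i ≤ c i := fun i => by
    dsimp only [wstar]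
    split_ifs with hi
    exacts [le_rfl, habove i hi]
  have hmass : ∑ i, wstar i = 1 := (sum_ite_val_lt c hkm.le u).trans hsum
  refine ⟨⟨fun i => ⟨(hpos i).le, hcap i⟩, hmass⟩, fun w hw hwsum => ?_⟩
  refine Real.prod_le_prod_of_sum_eq_of_level hu hpos (fun i => (hw i).1)
    (hwsum.trans hmass.symm) fun i => ?_
  dsimp only [wstar]
  split_ifs with hi
  exacts [Or.inr ⟨hbelow i hi, (hw i).2⟩, Or.inl rfl]
end
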